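/- Let C ⊆ F_p^n be nonempty with translation-symmetry subspace T = {s : C+s = C} = {0}. Then the support of the character sum f(y) = Σ_{c∈C} ω^{c·y} is not contained in any proper linear subspace of F_p^n. -/

import Mathlib

/-! If the support of `f` lies in a proper subspace `V`, pick `s ≠ 0` with `s · y = 0` on `V`.
Then `ω^{s·y} f(y) = f(y)` for every `y`, and the left side is the character sum of `C + s`.
The characters `y ↦ ω^{c·y}` are pairwise distinct, hence linearly independent, so a character
sum determines its set: `C + s = C`, contradicting `T = {0}`. -/

open Finset

/-- `ω = exp(2πi/p)`. -/
noncomputable def omegaP (p : ℕ) : ℂ := Complex.exp (2 * Real.pi * Complex.I / p)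

/-- standard dot product on `F_p^n`. -/
def dotp {p n : ℕ} (x y : Fin n → ZMod p) : ZMod p := ∑ i, x i * y i

/-- character sum `f(y) = Σ_{c ∈ C} ω^{c·y}`. -/
noncomputable def fsum {p n : ℕ} (C : Finset (Fin n → ZMod p)) (y : Fin n → ZMod p) : ℂ :=
  ∑ c ∈ C, omegaP p ^ (dotp c y).val

open Matrix

theorem LinearIndependent.finset_sum_injective {ι R M : Type*} [Semiring R] [Nontrivial R]
    [AddCommMonoid M] [Module R M] {v : ι → M} (hv : LinearIndependent R v) :
    Function.Injective fun s : Finset ι => ∑ i ∈ s, v i := by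
  classical
  have sum_eq (s : Finset ι) :
      ∑ i ∈ s, v i = Finsupp.linearCombination R v (∑ i ∈ s, Finsupp.single i 1) := by
    simp [map_sum]
  intro s t hst
  have hsupp := hv (by simpa only [sum_eq] using hst)
  ext x
  have hx := DFunLike.congr_fun hsupp x
  simp only [Finsupp.finsetSum_apply, Finsupp.single_apply, sum_ite_eq'] at hx
  by_cases hxs : x ∈ s <;> by_cases hxt : x ∈ t <;> simp_all

theorem Submodule.exists_ne_zero_forall_dotProduct_eq_zero {K ι : Type*} [Field K] [Fintype ι]
    [DecidableEq ι] {V : Submodule K (ι → K)} (hV : V ≠ ⊤) :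
    ∃ s ≠ 0, ∀ y ∈ V, s ⬝ᵥ y = 0 := by
  obtain ⟨φ, hφ, hVφ⟩ := V.exists_dual_map_eq_bot_of_lt_top hV.lt_top inferInstance
  refine ⟨(dotProductEquiv K ι).symm φ, by simpa using hφ, fun y hy => ?_⟩
  have hφy : φ y = 0 := by simpa [hVφ] using Submodule.mem_map_of_mem (f := φ) hy
  rwa [← (dotProductEquiv K ι).apply_symm_apply φ] at hφy

namespace AddChar

variable {R M ι : Type*} [CommRing R] [CommMonoid M] [Fintype ι]

def dotProductShift (ψ : AddChar R M) (c : ι → R) : AddChar (ι → R) M where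
  toFun y := ψ (c ⬝ᵥ y)
  map_zero_eq_one' := by simp
  map_add_eq_mul' y z := by simp [dotProduct_add, map_add_eq_mul]

@[simp]
theorem dotProductShift_apply (ψ : AddChar R M) (c y : ι → R) :
    ψ.dotProductShift c y = ψ (c ⬝ᵥ y) := rfl

theorem dotProductShift_injective [DecidableEq ι] {ψ : AddChar R M} (hψ : ψ.IsPrimitive) :
    Function.Injective (ψ.dotProductShift (ι := ι)) := by
  intro c d hcd
  funext i
  refine to_mulShift_inj_of_isPrimitive hψ (DFunLike.ext _ _ fun t => ?_)
  simpa using DFunLike.congr_fun hcd (Pi.single i t)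

end AddChar

theorem omegaP_pow_val (p : ℕ) [NeZero p] (a : ZMod p) : omegaP p ^ a.val = ZMod.stdAddChar a := by
  rw [omegaP, ← Complex.exp_nat_mul, ZMod.stdAddChar_apply, ZMod.toCircle_apply]
  ring_nf

section CharacterSum

variable {p n : ℕ} [NeZero p]

theorem fsum_eq_sum_dotProductShift (C : Finset (Fin n → ZMod p)) :
    fsum C = ∑ c ∈ C, ⇑((ZMod.stdAddChar (N := p)).dotProductShift c) := by
  funext y
  simp [fsum, Finset.sum_apply, omegaP_pow_val, dotp, dotProduct]

theorem fsum_injective : Function.Injective (fsum (p := p) (n := n)) := by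
  intro C D hCD
  simp only [fsum_eq_sum_dotProductShift] at hCD
  exact ((AddChar.linearIndependent _ ℂ).comp _
    (AddChar.dotProductShift_injective (ZMod.isPrimitive_stdAddChar p))).finset_sum_injective hCD

theorem fsum_image_add_right (C : Finset (Fin n → ZMod p)) (s y : Fin n → ZMod p) :
    fsum (C.image (· + s)) y = ZMod.stdAddChar (N := p) (s ⬝ᵥ y) * fsum C y := by
  rw [fsum_eq_sum_dotProductShift, fsum_eq_sum_dotProductShift, Finset.sum_apply, Finset.sum_apply,
    sum_image (fun _ _ _ _ => add_right_cancel), mul_sum]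
  refine sum_congr rfl fun c _ => ?_
  simp [AddChar.map_add_eq_mul, mul_comm]

theorem image_add_right_eq_self {C : Finset (Fin n → ZMod p)} {s : Fin n → ZMod p}
    (hs : ∀ y, fsum C y ≠ 0 → s ⬝ᵥ y = 0) : C.image (· + s) = C := by
  refine fsum_injective (funext fun y => ?_)
  rw [fsum_image_add_right]
  by_cases hy : fsum C y = 0
  · rw [hy, mul_zero]
  · rw [hs y hy, AddChar.map_zero_eq_one, one_mul]

end CharacterSum

theorem stmt9_general (p n : ℕ) [Fact p.Prime] (C : Finset (Fin n → ZMod p))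
    (hT : ∀ s : Fin n → ZMod p, C.image (fun c => c + s) = C → s = 0) :
    ¬ ∃ V0 : Submodule (ZMod p) (Fin n → ZMod p), V0 ≠ ⊤ ∧
      {y : Fin n → ZMod p | fsum C y ≠ 0} ⊆ (V0 : Set (Fin n → ZMod p)) := by
  have : NeZero p := ⟨(Fact.out : p.Prime).ne_zero⟩
  rintro ⟨V0, hV0, hsupp⟩
  obtain ⟨s, hs0, hsV0⟩ := V0.exists_ne_zero_forall_dotProduct_eq_zero hV0
  exact hs0 (hT s (image_add_right_eq_self fun y hy => hsV0 y (hsupp hy)))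

/-- If a nonempty code `C` has trivial translation stabilizer, then the support of its
character sum is not contained in any proper linear subspace of `F_p^n`. -/
theorem stmt9 (p n : ℕ) [Fact p.Prime] (C : Finset (Fin n → ZMod p)) (hne : C.Nonempty)
    (hT : ∀ s : Fin n → ZMod p, C.image (fun c => c + s) = C → s = 0) :
    ¬ ∃ V0 : Submodule (ZMod p) (Fin n → ZMod p), V0 ≠ ⊤ ∧
      {y : Fin n → ZMod p | fsum C y ≠ 0} ⊆ (V0 : Set (Fin n → ZMod p)) :=
  stmt9_general p n C hT
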